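/- Fix an integer m ≥ 1 and let n_z be an odd positive integer with gcd(n_z, 2m+1) = 1. Let j ∈ {1, 3}, let k be an integer with 1 ≤ k ≤ m, and let t₁ = ((2m+1)j − 2k)π/(2(2m+1)), t₂ = ((2m+1)j + 2k)π/(2(2m+1)) be the corresponding Type II double-point times. Then for every real φ_z: cos(n_z t₁ + φ_z) = cos(n_z t₂ + φ_z) if and only if φ_z − π/2 is an integer multiple of π. In particular, the set of singular z-phases for these crossings is {π/2} modulo π and is independent of n_z. -/
import Mathlib


open Real

/-- For the Type II double points with `j ∈ {1, 3}` of the projection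
`t ↦ (cos 2t, cos((2m+1)t + 1/2))`, the height function `z(t) = cos(n_z t + φ_z)`
(with `n_z` odd and coprime to `2m+1`) makes the crossing singular if and only if
`φ_z − π/2` is an integer multiple of `π`; in particular this is independent of `n_z`. -/
theorem typeII_j13_singular_phases
    (m : ℤ) (hm : 1 ≤ m) (nz : ℕ) (hnz : 0 < nz) (hodd : Odd nz)
    (hcop : Int.gcd (nz : ℤ) (2 * m + 1) = 1)
    (j : ℤ) (hj : j = 1 ∨ j = 3)
    (k : ℤ) (hk1 : 1 ≤ k) (hk2 : k ≤ m)
    (t₁ t₂ : ℝ)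
    (ht₁ : t₁ = ((2 * (m : ℝ) + 1) * (j : ℝ) - 2 * (k : ℝ)) * π / (2 * (2 * (m : ℝ) + 1)))
    (ht₂ : t₂ = ((2 * (m : ℝ) + 1) * (j : ℝ) + 2 * (k : ℝ)) * π / (2 * (2 * (m : ℝ) + 1))) :
    ∀ φz : ℝ,
      Real.cos ((nz : ℝ) * t₁ + φz) = Real.cos ((nz : ℝ) * t₂ + φz) ↔
        ∃ i : ℤ, φz - π / 2 = i * π := by
  intro φz
  have h2m : (2 * (m : ℝ) + 1) ≠ 0 := by
    have : (1:ℝ) ≤ (m:ℝ) := by exact_mod_cast hm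
    nlinarith
  have hπ : (π : ℝ) ≠ 0 := Real.pi_ne_zero
  -- nz * j is odd
  obtain ⟨b, hb⟩ := hodd
  have hoddj : ∃ c : ℤ, (nz : ℤ) * j = 2 * c + 1 := by
    rcases hj with rfl | rfl
    · exact ⟨b, by push_cast [hb]; ring⟩
    · exact ⟨3 * b + 1, by push_cast [hb]; ring⟩
  obtain ⟨c, hc⟩ := hoddj
  have hcR : (nz : ℝ) * (j : ℝ) = 2 * (c : ℝ) + 1 := by exact_mod_cast hc
  have hsum : (nz : ℝ) * t₁ + (nz : ℝ) * t₂ = (nz : ℝ) * (j : ℝ) * π := by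
    rw [ht₁, ht₂]; field_simp; ring
  have hdiff : (2 * (m : ℝ) + 1) * ((nz : ℝ) * t₂ - (nz : ℝ) * t₁)
      = 2 * (nz : ℝ) * (k : ℝ) * π := by
    rw [ht₁, ht₂]; field_simp; ring
  rw [Real.cos_eq_cos_iff]
  constructor
  · rintro ⟨a, h | h⟩
    · exfalso
      have hd : (nz : ℝ) * t₂ - (nz : ℝ) * t₁ = 2 * (a : ℝ) * π := by linarith
      have hreq : ((nz : ℤ) * k * 2 : ℝ) * π = ((2 * m + 1) * (2 * a) : ℝ) * π := by
        push_cast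
        rw [hd] at hdiff
        linarith [hdiff]
      have hint : (nz : ℤ) * k * 2 = (2 * m + 1) * (2 * a) := by
        have := mul_right_cancel₀ hπ hreq
        exact_mod_cast this
      have hdvd : (2 * m + 1) ∣ (nz : ℤ) * k := ⟨a, by linarith⟩
      have hcop' : IsCoprime (2 * m + 1) (nz : ℤ) := by
        rw [Int.isCoprime_iff_gcd_eq_one, Int.gcd_comm]
        exact hcop
      have hdvdk : (2 * m + 1) ∣ k := hcop'.dvd_of_dvd_mul_left hdvd
      have := Int.le_of_dvd (by omega) hdvdk
      omega
    · -- 2φ = 2aπ - nz j π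
      refine ⟨a - c - 1, ?_⟩
      have h2φ : 2 * φz = 2 * (a : ℝ) * π - (2 * (c : ℝ) + 1) * π := by
        rw [← hcR]; linarith [hsum, h]
      push_cast
      linarith
  · rintro ⟨i, hi⟩
    refine ⟨c + 1 + i, Or.inr ?_⟩
    push_cast
    have : φz = π / 2 + (i : ℝ) * π := by linarith
    rw [this]
    have := hsum
    rw [hcR] at this
    linarith
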